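/- arXiv:2006.04335 — 9 statements merged into one kernel-verified Lean document; each statement's English description precedes it below -/
import Mathlib

section
/- Suppose the scale factor s is nonzero and that the camera–odometer constraint equations hold at every sampling time t ∈ ι, namely: ω(t)·y_C + s·v_x(t) − ω(t)·Y_l − β_l·ΔY·o_l(t) = 0, −ω(t)·x_C + s·v_y(t) + ω(t)·X_v = 0, and ω(t) + β_l·o_l(t) − β_r·o_r(t) = 0. Then the vector k = (Y_l − y_C, ΔY, X_v − x_C, 0, 0, s) ∈ ℝ⁶ is nonzero and satisfies D(t)·k = 0 for every t ∈ ι, where D(t) is the 3×6 matrix with rows (−ω(t), −β_l·o_l(t), 0, −ΔY·o_l(t), 0, v_x(t)), (0, 0, ω(t), 0, 0, v_y(t)), and (0, 0, 0, o_l(t), −o_r(t), 0). Consequently the stacked observability matrix obtained by collecting D(t) over all t ∈ ι does not have trivial kernel, i.e. it fails to have full column rank, so the parameter vector (Y_l, ΔY, X_v, β_l, β_r, s) is not locally identifiable from a monocular camera and wheel odometers. -/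
open Matrix

/-! The first two entries of `D t *ᵥ k` are, up to rearrangement, the left-hand sides of the
`x`- and `y`-constraint equations, and the third row of `D t` only meets the two zero entries
of `k`; the last entry `s` of `k` keeps it nonzero. -/

theorem mono_odometer_full_params_not_identifiable_general
    {ι : Type*} (ω vx vy ol orr : ι → ℝ)
    (Yl ΔY Xv βl s xC yC : ℝ)
    (hs : s ≠ 0)
    (hcx : ∀ t, ω t * yC + s * vx t - ω t * Yl - βl * ΔY * ol t = 0)
    (hcy : ∀ t, -(ω t) * xC + s * vy t + ω t * Xv = 0) :
    let k : Fin 6 → ℝ := ![Yl - yC, ΔY, Xv - xC, 0, 0, s]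
    let D : ι → Matrix (Fin 3) (Fin 6) ℝ := fun t =>
      !![-(ω t), -(βl * ol t), 0, -(ΔY * ol t), 0, vx t;
         0,       0,           ω t, 0,          0, vy t;
         0,       0,           0,   ol t, -(orr t), 0]
    k ≠ 0 ∧ ∀ t, D t *ᵥ k = 0 := by
  intro k D
  refine ⟨fun hk => hs (congrFun hk 5), fun t => ?_⟩
  ext i
  fin_cases i <;> simp [D, k, mulVec, dotProduct, Fin.sum_univ_succ]
  · linear_combination hcx t
  · linear_combination hcy t

/-- With a nonzero visual scale `s` and the camera–odometer constraint
equations holding at every sampling time, the vector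
`k = (Y_l − y_C, ΔY, X_v − x_C, 0, 0, s)` is a nonzero vector lying in the kernel of
every block `D(t)` of the observability matrix; hence the stacked observability matrix
does not have full column rank and `(Y_l, ΔY, X_v, β_l, β_r, s)` is not locally
identifiable from a monocular camera and wheel odometers. -/
theorem mono_odometer_full_params_not_identifiable
    {ι : Type*} (ω vx vy ol orr : ι → ℝ)
    (Yl ΔY Xv βl βr s xC yC : ℝ)
    (hs : s ≠ 0)
    (hcx : ∀ t, ω t * yC + s * vx t - ω t * Yl - βl * ΔY * ol t = 0)
    (hcy : ∀ t, -(ω t) * xC + s * vy t + ω t * Xv = 0)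
    (hcw : ∀ t, ω t + βl * ol t - βr * orr t = 0) :
    let k : Fin 6 → ℝ := ![Yl - yC, ΔY, Xv - xC, 0, 0, s]
    let D : ι → Matrix (Fin 3) (Fin 6) ℝ := fun t =>
      !![-(ω t), -(βl * ol t), 0, -(ΔY * ol t), 0, vx t;
         0,       0,           ω t, 0,          0, vy t;
         0,       0,           0,   ol t, -(orr t), 0]
    k ≠ 0 ∧ ∀ t, D t *ᵥ k = 0 :=
  mono_odometer_full_params_not_identifiable_general ω vx vy ol orr Yl ΔY Xv βl s xC yC hs hcx hcy
end

section
/- Suppose s ≠ 0 and the parameter tuple (Y_l, ΔY, X_v, β_l, β_r, s) satisfies, for every sampling time t ∈ ι: ω(t)·y_C + s·v_x(t) − ω(t)·Y_l − β_l·ΔY·o_l(t) = 0, −ω(t)·x_C + s·v_y(t) + ω(t)·X_v = 0, and ω(t) + β_l·o_l(t) − β_r·o_r(t) = 0. Then for every λ ∈ ℝ, the parameter tuple ((1+λ/s)·Y_l − (λ/s)·y_C, (1+λ/s)·ΔY, (1+λ/s)·X_v − (λ/s)·x_C, β_l, β_r, s+λ) satisfies the same three constraint equations for every t ∈ ι.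 In particular the two parameter tuples are indistinguishable from the measurements. -/
/-!
Each of the first two constraints is linear and homogeneous in the unknowns
`(s, Y_l - y_C, ΔY)`, resp. `(s, X_v - x_C)`. The family multiplies all of them by
`c = 1 + λ / s` (note `(1 + λ/s) Y_l - (λ/s) y_C - y_C = c (Y_l - y_C)`), so its residuals are
`c` times the original ones and vanish with them; the yaw-rate constraint does not involve `s`.
-/

section ScaleFamily

variable {K : Type*} [Field K] {s : K}

theorem add_eq_one_add_div_mul (hs : s ≠ 0) (lam : K) : s + lam = (1 + lam / s) * s := by
  field_simp

variable (lam ω v o Y C d β : K)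

theorem x_constraint_rescale (hs : s ≠ 0) :
    ω * C + (s + lam) * v - ω * ((1 + lam / s) * Y - (lam / s) * C) - β * ((1 + lam / s) * d) * o
      = (1 + lam / s) * (ω * C + s * v - ω * Y - β * d * o) := by
  rw [add_eq_one_add_div_mul hs]
  ring

theorem y_constraint_rescale (hs : s ≠ 0) :
    -ω * C + (s + lam) * v + ω * ((1 + lam / s) * Y - (lam / s) * C)
      = (1 + lam / s) * (-ω * C + s * v + ω * Y) := by
  rw [add_eq_one_add_div_mul hs]
  ring

end ScaleFamily

/-- If `s ≠ 0` and the parameter tuple `(Y_l, ΔY, X_v, β_l, β_r, s)`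
satisfies the camera–odometer constraint equations at every sampling time, then for
every `λ ∈ ℝ` the tuple
`((1+λ/s)·Y_l − (λ/s)·y_C, (1+λ/s)·ΔY, (1+λ/s)·X_v − (λ/s)·x_C, β_l, β_r, s+λ)`
satisfies the same three constraint equations at every sampling time; the two tuples
are indistinguishable from the measurements. -/
theorem mono_odometer_indistinguishable_family
    {ι : Type*} (ω vx vy ol orr : ι → ℝ)
    (Yl ΔY Xv βl βr s xC yC : ℝ)
    (hs : s ≠ 0)
    (hcx : ∀ t, ω t * yC + s * vx t - ω t * Yl - βl * ΔY * ol t = 0)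
    (hcy : ∀ t, -(ω t) * xC + s * vy t + ω t * Xv = 0)
    (hcw : ∀ t, ω t + βl * ol t - βr * orr t = 0) :
    ∀ lam : ℝ, ∀ t,
      (ω t * yC + (s + lam) * vx t
          - ω t * ((1 + lam / s) * Yl - (lam / s) * yC)
          - βl * ((1 + lam / s) * ΔY) * ol t = 0) ∧
      (-(ω t) * xC + (s + lam) * vy t
          + ω t * ((1 + lam / s) * Xv - (lam / s) * xC) = 0) ∧
      (ω t + βl * ol t - βr * orr t = 0) := by
  intro lam t
  refine ⟨?_, ?_, hcw t⟩
  · rw [x_constraint_rescale lam _ _ _ _ _ _ _ hs, hcx t, mul_zero]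
  · rw [y_constraint_rescale lam _ _ _ _ hs, hcy t, mul_zero]
end

section
/- Assume s ≠ 0, ΔY ≠ 0, and that for every sampling time t ∈ ι the ICR-only camera–odometer constraints hold: ω(t)·y_C + s·v_x(t) − ω(t)·Y_l − o_l(t) = 0, −ω(t)·x_C + s·v_y(t) + ω(t)·X_v = 0, and ω(t) + (o_l(t) − o_r(t))/ΔY = 0. Then the following are equivalent: (a) the only vector k = (k₁,k₂,k₃,k₄) ∈ ℝ⁴ satisfying, for every t ∈ ι, −ω(t)·k₁ + v_x(t)·k₄ = 0, ω(t)·k₃ + v_y(t)·k₄ = 0, and ((o_r(t) − o_l(t))/ΔY²)·k₂ = 0, is k = 0; (b) the only vector k = (k₁,k₂,k₃,k₄) ∈ ℝ⁴ satisfying, for every t ∈ ι, −ω(t)·k₁ + o_l(t)·k₄ = 0, ω(t)·k₃ = 0, and (o_r(t) − o_l(t))·k₂ = 0, is k = 0. That is, the original observability matrix has full column rank if and only if the simplified observability matrix does. -/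
/-!
Up to scaling its `ω`-rows by `ΔY ^ 2`, the simplified observability matrix is the original one
after the invertible column operation `k₁ ↦ s k₁ - (Yl - yC) k₄`, `k₃ ↦ s k₃ + (xC - Xv) k₄`:
by the constraints `hcx` and `hcy`, each row of the simplified system at the transformed vector
is `s` times the corresponding row of the original system. Invertible column and row operations
do not change whether the kernel is trivial.
-/

theorem forall_imp_and_eq_zero_iff_forall_prod {α β γ δ : Type*} [Zero α] [Zero β] [Zero γ]
    [Zero δ] (P : α → β → γ → δ → Prop) :
    (∀ a b c d, P a b c d → a = 0 ∧ b = 0 ∧ c = 0 ∧ d = 0) ↔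
      ∀ k : α × β × γ × δ, P k.1 k.2.1 k.2.2.1 k.2.2.2 → k = 0 := by
  simp only [Prod.forall, Prod.mk_eq_zero]

noncomputable def columnOp (s a b : ℝ) (hs : s ≠ 0) : (ℝ × ℝ × ℝ × ℝ) ≃+ (ℝ × ℝ × ℝ × ℝ) where
  toFun k := (s * k.1 - a * k.2.2.2, k.2.1, s * k.2.2.1 + b * k.2.2.2, k.2.2.2)
  invFun k := ((k.1 + a * k.2.2.2) / s, k.2.1, (k.2.2.1 - b * k.2.2.2) / s, k.2.2.2)
  left_inv k := by ext <;> field_simp <;> ring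
  right_inv k := by ext <;> field_simp <;> ring
  map_add' k l := by ext <;> simp only [Prod.fst_add, Prod.snd_add] <;> ring

section Rows

variable {ω vx vy ol orr : ℝ} {Yl ΔY Xv s xC yC k₁ k₂ k₃ k₄ : ℝ}

theorem icr_row_x_iff (hs : s ≠ 0) (hcx : ω * yC + s * vx - ω * Yl - ol = 0) :
    -ω * (s * k₁ - (Yl - yC) * k₄) + ol * k₄ = 0 ↔ -ω * k₁ + vx * k₄ = 0 := by
  rw [show -ω * (s * k₁ - (Yl - yC) * k₄) + ol * k₄ = s * (-ω * k₁ + vx * k₄) by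
    linear_combination (-k₄) * hcx, mul_eq_zero_iff_left hs]

theorem icr_row_y_iff (hs : s ≠ 0) (hcy : -ω * xC + s * vy + ω * Xv = 0) :
    ω * (s * k₃ + (xC - Xv) * k₄) = 0 ↔ ω * k₃ + vy * k₄ = 0 := by
  rw [show ω * (s * k₃ + (xC - Xv) * k₄) = s * (ω * k₃ + vy * k₄) by
    linear_combination (-k₄) * hcy, mul_eq_zero_iff_left hs]

theorem icr_row_ω_iff (hΔY : ΔY ≠ 0) :
    (orr - ol) * k₂ = 0 ↔ (orr - ol) / ΔY ^ 2 * k₂ = 0 := by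
  rw [div_mul_eq_mul_div, div_eq_zero_iff, or_iff_left (pow_ne_zero 2 hΔY)]

end Rows

theorem mono_odometer_icr_obs_matrix_rank_equiv_general
    {ι : Type*} (ω vx vy ol orr : ι → ℝ)
    (Yl ΔY Xv s xC yC : ℝ)
    (hs : s ≠ 0) (hΔY : ΔY ≠ 0)
    (hcx : ∀ t, ω t * yC + s * vx t - ω t * Yl - ol t = 0)
    (hcy : ∀ t, -(ω t) * xC + s * vy t + ω t * Xv = 0) :
    ((∀ k₁ k₂ k₃ k₄ : ℝ,
        (∀ t, -(ω t) * k₁ + vx t * k₄ = 0 ∧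
              ω t * k₃ + vy t * k₄ = 0 ∧
              ((orr t - ol t) / ΔY ^ 2) * k₂ = 0) →
        k₁ = 0 ∧ k₂ = 0 ∧ k₃ = 0 ∧ k₄ = 0)
      ↔
      (∀ k₁ k₂ k₃ k₄ : ℝ,
        (∀ t, -(ω t) * k₁ + ol t * k₄ = 0 ∧
              ω t * k₃ = 0 ∧
              (orr t - ol t) * k₂ = 0) →
        k₁ = 0 ∧ k₂ = 0 ∧ k₃ = 0 ∧ k₄ = 0)) := by
  rw [forall_imp_and_eq_zero_iff_forall_prod, forall_imp_and_eq_zero_iff_forall_prod]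
  let e := columnOp s (Yl - yC) (xC - Xv) hs
  refine e.toEquiv.forall_congr fun k => imp_congr (forall_congr' fun t => ?_) ?_
  · exact (and_congr (icr_row_x_iff hs (hcx t))
      (and_congr (icr_row_y_iff hs (hcy t)) (icr_row_ω_iff hΔY))).symm
  · exact (map_eq_zero_iff e e.injective).symm

/-- Under the ICR-only camera–odometer constraints (with `s ≠ 0` and
`ΔY ≠ 0`), the original observability matrix has full column rank iff the simplified
(column-operated) observability matrix does: in each case, full column rank is
expressed as the corresponding per-time linear equations forcing `k = 0`. -/
theorem mono_odometer_icr_obs_matrix_rank_equiv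
    {ι : Type*} (ω vx vy ol orr : ι → ℝ)
    (Yl ΔY Xv s xC yC : ℝ)
    (hs : s ≠ 0) (hΔY : ΔY ≠ 0)
    (hcx : ∀ t, ω t * yC + s * vx t - ω t * Yl - ol t = 0)
    (hcy : ∀ t, -(ω t) * xC + s * vy t + ω t * Xv = 0)
    (hcw : ∀ t, ω t + (ol t - orr t) / ΔY = 0) :
    ((∀ k₁ k₂ k₃ k₄ : ℝ,
        (∀ t, -(ω t) * k₁ + vx t * k₄ = 0 ∧
              ω t * k₃ + vy t * k₄ = 0 ∧
              ((orr t - ol t) / ΔY ^ 2) * k₂ = 0) →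
        k₁ = 0 ∧ k₂ = 0 ∧ k₃ = 0 ∧ k₄ = 0)
      ↔
      (∀ k₁ k₂ k₃ k₄ : ℝ,
        (∀ t, -(ω t) * k₁ + ol t * k₄ = 0 ∧
              ω t * k₃ = 0 ∧
              (orr t - ol t) * k₂ = 0) →
        k₁ = 0 ∧ k₂ = 0 ∧ k₃ = 0 ∧ k₄ = 0)) :=
  mono_odometer_icr_obs_matrix_rank_equiv_general ω vx vy ol orr Yl ΔY Xv s xC yC hs hΔY hcx hcy
end

section
/- There exists a nonzero vector k = (k₁,k₂,k₃,k₄) ∈ ℝ⁴ satisfying, for every sampling time t ∈ ι: −ω(t)·k₁ + o_l(t)·k₄ = 0, ω(t)·k₃ = 0, and (o_r(t) − o_l(t))·k₂ = 0, if and only if at least one of the following degenerate conditions holds: (i) o_l(t) = 0 for all t ∈ ι; (ii) ω(t) = 0 for all t ∈ ι; (iii) ω, o_l, and o_r are all constant functions on ι; (iv) o_l(t) = o_r(t) for all t ∈ ι; (v) there exists λ ∈ ℝ with ω(t) = λ·o_l(t) for all t ∈ ι. -/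
/-! The three equations decouple: `k₃` only meets `ω`, `k₂` only meets `o_r - o_l`, and `(k₁, k₄)`
only meets the pair `(ω, o_l)`. So a nonzero kernel vector exists iff one of the three blocks has a
nonzero solution, i.e. iff `ω ≡ 0`, or `o_l ≡ o_r`, or the pencil `-ω k₁ + o_l k₄` degenerates,
which happens exactly when `o_l ≡ 0` or `ω` is a multiple of `o_l`. Condition (iii) adds nothing:
constant `ω, o_l` are always in the last case. -/

section Kernel

variable {ι : Type*}

theorem exists_ne_zero_forall_mul_eq_zero_iff {R : Type*} [MulZeroOneClass R] [NoZeroDivisors R]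
    [Nontrivial R] (f : ι → R) :
    (∃ k ≠ 0, ∀ t, f t * k = 0) ↔ ∀ t, f t = 0 := by
  constructor
  · rintro ⟨k, hk, h⟩ t
    exact (mul_eq_zero.mp (h t)).resolve_right hk
  · intro h
    exact ⟨1, one_ne_zero, fun t => by rw [h t, zero_mul]⟩

theorem exists_ne_zero_forall_neg_mul_add_mul_eq_zero_iff {K : Type*} [Field K] (f g : ι → K) :
    (∃ a b : K, ¬(a = 0 ∧ b = 0) ∧ ∀ t, -(f t) * a + g t * b = 0) ↔
      (∀ t, g t = 0) ∨ ∃ lam : K, ∀ t, f t = lam * g t := by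
  constructor
  · rintro ⟨a, b, hab, h⟩
    by_cases ha : a = 0
    · have hb : b ≠ 0 := fun hb => hab ⟨ha, hb⟩
      left
      intro t
      have hgt : g t * b = 0 := by simpa [ha] using h t
      exact (mul_eq_zero.mp hgt).resolve_right hb
    · right
      refine ⟨b / a, fun t => ?_⟩
      field_simp
      linear_combination -(h t)
  · rintro (h | ⟨lam, h⟩)
    · exact ⟨0, 1, by simp, fun t => by simp [h t]⟩
    · exact ⟨1, lam, by simp, fun t => by rw [h t]; ring⟩

theorem forall_eq_zero_or_exists_eq_mul_of_forall_eq {K : Type*} [Field K] {f g : ι → K}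
    {c d : K} (hf : ∀ t, f t = c) (hg : ∀ t, g t = d) :
    (∀ t, g t = 0) ∨ ∃ lam : K, ∀ t, f t = lam * g t := by
  by_cases hd : d = 0
  · exact Or.inl fun t => (hg t).trans hd
  · exact Or.inr ⟨c / d, fun t => by rw [hf t, hg t, div_mul_cancel₀ c hd]⟩

theorem exists_icr_kernel_vector_iff {K : Type*} [Field K] (ω ol orr : ι → K) :
    (∃ k₁ k₂ k₃ k₄ : K, ¬(k₁ = 0 ∧ k₂ = 0 ∧ k₃ = 0 ∧ k₄ = 0) ∧
        ∀ t, -(ω t) * k₁ + ol t * k₄ = 0 ∧ ω t * k₃ = 0 ∧ (orr t - ol t) * k₂ = 0) ↔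
      (∃ k₁ k₄ : K, ¬(k₁ = 0 ∧ k₄ = 0) ∧ ∀ t, -(ω t) * k₁ + ol t * k₄ = 0) ∨
      (∃ k₂ ≠ 0, ∀ t, (orr t - ol t) * k₂ = 0) ∨
      (∃ k₃ ≠ 0, ∀ t, ω t * k₃ = 0) := by
  constructor
  · rintro ⟨k₁, k₂, k₃, k₄, hk, h⟩
    by_cases hk₃ : k₃ = 0
    · by_cases hk₂ : k₂ = 0
      · exact Or.inl ⟨k₁, k₄, fun h₁₄ => hk ⟨h₁₄.1, hk₂, hk₃, h₁₄.2⟩, fun t => (h t).1⟩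
      · exact Or.inr (Or.inl ⟨k₂, hk₂, fun t => (h t).2.2⟩)
    · exact Or.inr (Or.inr ⟨k₃, hk₃, fun t => (h t).2.1⟩)
  · rintro (⟨k₁, k₄, hk, h⟩ | ⟨k₂, hk₂, h⟩ | ⟨k₃, hk₃, h⟩)
    · exact ⟨k₁, 0, 0, k₄, fun h' => hk ⟨h'.1, h'.2.2.2⟩, fun t => ⟨h t, mul_zero _, mul_zero _⟩⟩
    · exact ⟨0, k₂, 0, 0, fun h' => hk₂ h'.2.1, fun t => ⟨by ring, mul_zero _, h t⟩⟩
    · exact ⟨0, 0, k₃, 0, fun h' => hk₃ h'.2.2.1, fun t => ⟨by ring, h t, mul_zero _⟩⟩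

end Kernel

/-- A nonzero vector `k ∈ ℝ⁴` annihilating every row of the simplified
camera–odometer (ICR-only) observability matrix exists iff one of the degenerate
motion conditions (i)–(v) holds. -/
theorem mono_odometer_icr_degenerate_characterization
    {ι : Type*} (ω ol orr : ι → ℝ) :
    (∃ k₁ k₂ k₃ k₄ : ℝ, ¬(k₁ = 0 ∧ k₂ = 0 ∧ k₃ = 0 ∧ k₄ = 0) ∧
        ∀ t, -(ω t) * k₁ + ol t * k₄ = 0 ∧
             ω t * k₃ = 0 ∧
             (orr t - ol t) * k₂ = 0)
      ↔
      ((∀ t, ol t = 0) ∨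
       (∀ t, ω t = 0) ∨
       (∃ c₁ c₂ c₃ : ℝ, ∀ t, ω t = c₁ ∧ ol t = c₂ ∧ orr t = c₃) ∨
       (∀ t, ol t = orr t) ∨
       (∃ lam : ℝ, ∀ t, ω t = lam * ol t)) := by
  have hconst : (∃ c₁ c₂ c₃ : ℝ, ∀ t, ω t = c₁ ∧ ol t = c₂ ∧ orr t = c₃) →
      (∀ t, ol t = 0) ∨ ∃ lam : ℝ, ∀ t, ω t = lam * ol t := fun ⟨_, _, _, h⟩ =>
    forall_eq_zero_or_exists_eq_mul_of_forall_eq (fun t => (h t).1) (fun t => (h t).2.1)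
  have hdiff : (∀ t, orr t - ol t = 0) ↔ ∀ t, ol t = orr t :=
    forall_congr' fun t => sub_eq_zero.trans eq_comm
  rw [exists_icr_kernel_vector_iff, exists_ne_zero_forall_neg_mul_add_mul_eq_zero_iff,
    exists_ne_zero_forall_mul_eq_zero_iff, exists_ne_zero_forall_mul_eq_zero_iff, hdiff]
  generalize (∃ c₁ c₂ c₃ : ℝ, ∀ t, ω t = c₁ ∧ ol t = c₂ ∧ orr t = c₃) = const at hconst ⊢
  generalize (∃ lam : ℝ, ∀ t, ω t = lam * ol t) = prop at hconst ⊢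
  tauto
end

section
/- Assume s ≠ 0, ΔY ≠ 0, and that for every sampling time t ∈ ι the ICR-only camera–odometer constraints hold: ω(t)·y_C + s·v_x(t) − ω(t)·Y_l − o_l(t) = 0, −ω(t)·x_C + s·v_y(t) + ω(t)·X_v = 0, and ω(t) + (o_l(t) − o_r(t))/ΔY = 0. Then there exists a nonzero vector k = (k₁,k₂,k₃,k₄) ∈ ℝ⁴ satisfying, for every t ∈ ι, −ω(t)·k₁ + v_x(t)·k₄ = 0, ω(t)·k₃ + v_y(t)·k₄ = 0, and ((o_r(t) − o_l(t))/ΔY²)·k₂ = 0, if and only if at least one of the following degenerate conditions holds: (i) o_l(t) = 0 for all t; (ii) ω(t) = 0 for all t; (iii) ω, o_l, o_r are all constant functions on ι; (iv) o_l(t) = o_r(t) for all t; (v) there exists λ ∈ ℝ with ω(t) = λ·o_l(t) for all t. In particular, under general motion (none of (i)–(v)), the parameter vector (Y_l, ΔY, X_v, s) is locally identifiable from a monocular camera and wheel odometers. -/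
/-!
Eliminating `v_x` with the camera constraint turns the first row of the observability matrix
into `k₄ • o_l + ((Y_l - y_C) k₄ - s k₁) • ω = 0`. So if `o_l` and `ω` are linearly independent,
then `k₄ = k₁ = 0`, and evaluating the other two rows where `ω ≠ 0` gives `k₃ = k₂ = 0`.
Conversely a dependence `a • o_l + b • ω = 0` yields the null vector
`(a (Y_l - y_C) - b, 0, -a (x_C - X_v), a s)`. Finally, because `o_r - o_l = ΔY ω`, conditions
(i)–(v) all say that `o_l ≡ 0` or that `ω` is a multiple of `o_l`.
-/

theorem not_linearIndependent_pair_iff {K V : Type*} [DivisionRing K] [AddCommGroup V]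
    [Module K V] {x y : V} :
    ¬LinearIndependent K ![x, y] ↔ x = 0 ∨ ∃ a : K, a • x = y := by
  by_cases hx : x = 0
  · simpa [hx] using fun h => h.ne_zero 0 rfl
  · simp [LinearIndependent.pair_iff' hx, hx]

theorem exists_ne_zero_null_vector_iff_not_linearIndependent {ι : Type*}
    {ω vx vy ol r : ι → ℝ} {s p q c : ℝ} (hs : s ≠ 0) (hc : c ≠ 0)
    (hvx : ∀ t, s * vx t = ol t + p * ω t) (hvy : ∀ t, s * vy t = q * ω t)
    (hr : ∀ t, r t = c * ω t) :
    (∃ k₁ k₂ k₃ k₄ : ℝ, ¬(k₁ = 0 ∧ k₂ = 0 ∧ k₃ = 0 ∧ k₄ = 0) ∧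
        ∀ t, -(ω t) * k₁ + vx t * k₄ = 0 ∧ ω t * k₃ + vy t * k₄ = 0 ∧ r t * k₂ = 0) ↔
      ¬LinearIndependent ℝ ![ol, ω] := by
  constructor
  · rintro ⟨k₁, k₂, k₃, k₄, hk, hrows⟩ hli
    have hrel : k₄ • ol + (p * k₄ - s * k₁) • ω = 0 := funext fun t => by
      simp only [Pi.add_apply, Pi.smul_apply, smul_eq_mul, Pi.zero_apply]
      linear_combination s * (hrows t).1 - k₄ * hvx t
    obtain ⟨hk₄, hk₁⟩ := LinearIndependent.pair_iff.mp hli _ _ hrel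
    obtain ⟨t₀, ht₀⟩ : ∃ t, ω t ≠ 0 := by
      by_contra! h
      exact hli.ne_zero 1 (funext h)
    obtain ⟨-, hrow₂, hrow₃⟩ := hrows t₀
    refine hk ⟨?_, ?_, ?_, hk₄⟩
    · simpa [hk₄, hs] using hk₁
    · simpa [hr, hc, ht₀] using hrow₃
    · simpa [hk₄, ht₀] using hrow₂
  · intro h
    obtain ⟨a, b, hab, hne⟩ : ∃ a b : ℝ, a • ol + b • ω = 0 ∧ ¬(a = 0 ∧ b = 0) := by
      simpa [LinearIndependent.pair_iff] using h
    refine ⟨a * p - b, 0, -(a * q), a * s, ?_, fun t => ⟨?_, ?_, mul_zero _⟩⟩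
    · rintro ⟨h₁, -, -, h₄⟩
      have ha : a = 0 := (mul_eq_zero.mp h₄).resolve_right hs
      exact hne ⟨ha, by simpa [ha] using h₁⟩
    · have hab_t := congrFun hab t
      simp only [Pi.add_apply, Pi.smul_apply, smul_eq_mul, Pi.zero_apply] at hab_t
      linear_combination a * hvx t + hab_t
    · linear_combination a * hvy t

theorem degenerate_motion_iff {ι : Type*} {ω ol orr : ι → ℝ} {c : ℝ} (hc : c ≠ 0)
    (hω : ∀ t, orr t - ol t = c * ω t) :
    ((∀ t, ol t = 0) ∨ (∀ t, ω t = 0) ∨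
        (∃ c₁ c₂ c₃ : ℝ, ∀ t, ω t = c₁ ∧ ol t = c₂ ∧ orr t = c₃) ∨
        (∀ t, ol t = orr t) ∨ (∃ lam : ℝ, ∀ t, ω t = lam * ol t)) ↔
      ol = 0 ∨ ∃ a : ℝ, a • ol = ω := by
  have of_ω_eq_zero (h : ∀ t, ω t = 0) : ol = 0 ∨ ∃ a : ℝ, a • ol = ω :=
    .inr ⟨0, funext fun t => by simp [h t]⟩
  constructor
  · rintro (h | h | ⟨c₁, c₂, c₃, h⟩ | h | ⟨lam, h⟩)
    · exact .inl (funext h)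
    · exact of_ω_eq_zero h
    · by_cases hc₂ : c₂ = 0
      · exact .inl (funext fun t => (h t).2.1.trans hc₂)
      · refine .inr ⟨c₁ / c₂, funext fun t => ?_⟩
        simp [(h t).1, (h t).2.1, hc₂]
    · refine of_ω_eq_zero fun t => ?_
      simpa [h t, hc] using hω t
    · exact .inr ⟨lam, funext fun t => (h t).symm⟩
  · rintro (h | ⟨a, h⟩)
    · exact .inl (congrFun h)
    · exact .inr (.inr (.inr (.inr ⟨a, fun t => (congrFun h t).symm⟩)))

/-- Under the ICR-only camera–odometer constraints (with `s ≠ 0` and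
`ΔY ≠ 0`), there exists a nonzero vector `k ∈ ℝ⁴` annihilating every row of the
observability matrix iff one of the degenerate conditions (i)–(v) holds; hence under
general motion the parameter vector `(Y_l, ΔY, X_v, s)` is locally identifiable from
a monocular camera and wheel odometers. -/
theorem mono_odometer_icr_identifiable_iff_nondegenerate
    {ι : Type*} (ω vx vy ol orr : ι → ℝ)
    (Yl ΔY Xv s xC yC : ℝ)
    (hs : s ≠ 0) (hΔY : ΔY ≠ 0)
    (hcx : ∀ t, ω t * yC + s * vx t - ω t * Yl - ol t = 0)
    (hcy : ∀ t, -(ω t) * xC + s * vy t + ω t * Xv = 0)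
    (hcw : ∀ t, ω t + (ol t - orr t) / ΔY = 0) :
    (∃ k₁ k₂ k₃ k₄ : ℝ, ¬(k₁ = 0 ∧ k₂ = 0 ∧ k₃ = 0 ∧ k₄ = 0) ∧
        ∀ t, -(ω t) * k₁ + vx t * k₄ = 0 ∧
             ω t * k₃ + vy t * k₄ = 0 ∧
             ((orr t - ol t) / ΔY ^ 2) * k₂ = 0)
      ↔
      ((∀ t, ol t = 0) ∨
       (∀ t, ω t = 0) ∨
       (∃ c₁ c₂ c₃ : ℝ, ∀ t, ω t = c₁ ∧ ol t = c₂ ∧ orr t = c₃) ∨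
       (∀ t, ol t = orr t) ∨
       (∃ lam : ℝ, ∀ t, ω t = lam * ol t)) := by
  have horr : ∀ t, orr t - ol t = ΔY * ω t := fun t => by
    have h := hcw t
    field_simp at h
    linarith
  have hrow₃ : ∀ t, (orr t - ol t) / ΔY ^ 2 = ΔY⁻¹ * ω t := fun t => by
    rw [horr]
    field_simp
  have hvx : ∀ t, s * vx t = ol t + (Yl - yC) * ω t := fun t => by linear_combination hcx t
  have hvy : ∀ t, s * vy t = (xC - Xv) * ω t := fun t => by linear_combination hcy t
  rw [exists_ne_zero_null_vector_iff_not_linearIndependent hs (inv_ne_zero hΔY) hvx hvy hrow₃,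
    not_linearIndependent_pair_iff, degenerate_motion_iff hΔY horr]
end

section
/- There exists a nonzero vector k = (k₁,k₂,k₃,k₄,k₅) ∈ ℝ⁵ satisfying, for every sampling time t ∈ ι: −ω(t)·k₁ + o_l(t)·k₂ = 0, ω(t)·k₃ = 0, and o_l(t)·k₄ − o_r(t)·k₅ = 0, if and only if at least one of the following degenerate conditions holds: (i) o_l(t) = 0 for all t ∈ ι, or o_r(t) = 0 for all t ∈ ι; (ii) ω(t) = 0 for all t ∈ ι; (iii) ω, o_l, and o_r are all constant functions on ι; (iv) there exists λ ∈ ℝ with o_r(t) = λ·o_l(t) for all t ∈ ι; (v) there exists λ ∈ ℝ with ω(t) = λ·o_l(t) for all t ∈ ι. -/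
/-!
The five unknowns decouple into three independent blocks: `(k₁, k₂)` sees only `ω, o_l`,
`k₃` sees only `ω`, and `(k₄, k₅)` sees only `o_l, o_r`. A two-unknown block has a nontrivial
solution exactly when its pair of functions is linearly dependent, i.e. `ω` (resp. `o_r`) is a
multiple of `o_l` or `o_l` vanishes; the middle block does exactly when `ω` vanishes.
Condition (iii) adds nothing: two constant functions are always dependent.
-/

section LinearDependence

variable {ι K : Type*} [Field K]

theorem exists_nontrivial_mul_eq_mul_iff (f g : ι → K) :
    (∃ a b : K, ¬(a = 0 ∧ b = 0) ∧ ∀ t, a * f t = b * g t) ↔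
      (∃ c, ∀ t, f t = c * g t) ∨ ∀ t, g t = 0 := by
  constructor
  · rintro ⟨a, b, hab, h⟩
    by_cases ha : a = 0
    · have hb : b ≠ 0 := fun hb => hab ⟨ha, hb⟩
      right
      intro t
      simpa [ha, hb] using (h t).symm
    · left
      exact ⟨b / a, fun t => by field_simp; linear_combination h t⟩
  · rintro (⟨c, hc⟩ | hg)
    · exact ⟨1, c, by simp, fun t => by rw [one_mul, hc t]⟩
    · exact ⟨0, 1, by simp, fun t => by simp [hg t]⟩

theorem exists_eq_mul_or_eq_zero_of_const {f g : ι → K} {a b : K}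
    (hf : ∀ t, f t = a) (hg : ∀ t, g t = b) :
    (∃ c, ∀ t, f t = c * g t) ∨ ∀ t, g t = 0 := by
  by_cases hb : b = 0
  · exact Or.inr fun t => (hg t).trans hb
  · exact Or.inl ⟨a / b, fun t => by rw [hf t, hg t, div_mul_cancel₀ a hb]⟩

end LinearDependence

theorem exists_ne_zero_mul_eq_zero_iff {ι M₀ : Type*} [MonoidWithZero M₀] [NoZeroDivisors M₀]
    [Nontrivial M₀] (f : ι → M₀) :
    (∃ k : M₀, k ≠ 0 ∧ ∀ t, f t * k = 0) ↔ ∀ t, f t = 0 :=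
  ⟨fun ⟨_, hk, h⟩ t => (mul_eq_zero.1 (h t)).resolve_right hk,
    fun h => ⟨1, one_ne_zero, fun t => by rw [h t, zero_mul]⟩⟩

theorem exists_nontrivial_reduced_kernel_iff {ι K : Type*} [CommRing K] (ω ol orr : ι → K) :
    (∃ k₁ k₂ k₃ k₄ k₅ : K, ¬(k₁ = 0 ∧ k₂ = 0 ∧ k₃ = 0 ∧ k₄ = 0 ∧ k₅ = 0) ∧
        ∀ t, -(ω t) * k₁ + ol t * k₂ = 0 ∧ ω t * k₃ = 0 ∧ ol t * k₄ - orr t * k₅ = 0) ↔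
      (∃ a b : K, ¬(a = 0 ∧ b = 0) ∧ ∀ t, a * ω t = b * ol t) ∨
      (∃ k : K, k ≠ 0 ∧ ∀ t, ω t * k = 0) ∨
      (∃ a b : K, ¬(a = 0 ∧ b = 0) ∧ ∀ t, a * orr t = b * ol t) := by
  constructor
  · rintro ⟨k₁, k₂, k₃, k₄, k₅, hk, h⟩
    by_cases h12 : k₁ = 0 ∧ k₂ = 0
    · by_cases h3 : k₃ = 0
      · exact Or.inr <| Or.inr ⟨k₅, k₄, fun h54 => hk ⟨h12.1, h12.2, h3, h54.2, h54.1⟩,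
          fun t => by linear_combination -(h t).2.2⟩
      · exact Or.inr <| Or.inl ⟨k₃, h3, fun t => (h t).2.1⟩
    · exact Or.inl ⟨k₁, k₂, h12, fun t => by linear_combination -(h t).1⟩
  · rintro (⟨a, b, hab, h⟩ | ⟨k, hk, h⟩ | ⟨a, b, hab, h⟩)
    · exact ⟨a, b, 0, 0, 0, fun h0 => hab ⟨h0.1, h0.2.1⟩,
        fun t => ⟨by linear_combination -(h t), by ring, by ring⟩⟩
    · exact ⟨0, 0, k, 0, 0, fun h0 => hk h0.2.2.1, fun t => ⟨by ring, h t, by ring⟩⟩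
    · exact ⟨0, 0, 0, b, a, fun h0 => hab ⟨h0.2.2.2.2, h0.2.2.2.1⟩,
        fun t => ⟨by ring, by ring, by linear_combination -(h t)⟩⟩

/-- A nonzero vector `k ∈ ℝ⁵` annihilating every row of the
column-reduced camera–IMU–odometer observability matrix exists iff one of the
degenerate motion conditions (i)–(v) holds. -/
theorem vio_reduced_degenerate_characterization
    {ι : Type*} (ω ol orr : ι → ℝ) :
    (∃ k₁ k₂ k₃ k₄ k₅ : ℝ, ¬(k₁ = 0 ∧ k₂ = 0 ∧ k₃ = 0 ∧ k₄ = 0 ∧ k₅ = 0) ∧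
        ∀ t, -(ω t) * k₁ + ol t * k₂ = 0 ∧
             ω t * k₃ = 0 ∧
             ol t * k₄ - orr t * k₅ = 0)
      ↔
      (((∀ t, ol t = 0) ∨ (∀ t, orr t = 0)) ∨
       (∀ t, ω t = 0) ∨
       (∃ c₁ c₂ c₃ : ℝ, ∀ t, ω t = c₁ ∧ ol t = c₂ ∧ orr t = c₃) ∨
       (∃ lam : ℝ, ∀ t, orr t = lam * ol t) ∨
       (∃ lam : ℝ, ∀ t, ω t = lam * ol t)) := by
  rw [exists_nontrivial_reduced_kernel_iff, exists_nontrivial_mul_eq_mul_iff,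
    exists_ne_zero_mul_eq_zero_iff, exists_nontrivial_mul_eq_mul_iff]
  constructor
  · tauto
  · rintro ((hl | hr) | hw | ⟨c₁, c₂, c₃, hc⟩ | hr | hw)
    · exact Or.inl (Or.inr hl)
    · exact Or.inr (Or.inr (Or.inl ⟨0, fun t => by rw [hr t, zero_mul]⟩))
    · exact Or.inr (Or.inl hw)
    · exact Or.inl (exists_eq_mul_or_eq_zero_of_const (fun t => (hc t).1) (fun t => (hc t).2.1))
    · exact Or.inr (Or.inr (Or.inl hr))
    · exact Or.inl (Or.inl hw)
end

section
/- Assume β_l ≠ 0 and let ΔY ∈ ℝ be arbitrary. Then there exists a nonzero vector k = (k₁,k₂,k₃,k₄,k₅) ∈ ℝ⁵ satisfying, for every sampling time t ∈ ι: −ω(t)·k₁ − β_l·o_l(t)·k₂ − ΔY·o_l(t)·k₄ = 0, ω(t)·k₃ = 0, and o_l(t)·k₄ − o_r(t)·k₅ = 0, if and only if at least one of the following degenerate conditions holds: (i) o_l(t) = 0 for all t, or o_r(t) = 0 for all t; (ii) ω(t) = 0 for all t; (iii) ω, o_l, o_r are all constant functions on ι; (iv) there exists λ ∈ ℝ with o_r(t)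 = λ·o_l(t) for all t; (v) there exists λ ∈ ℝ with ω(t) = λ·o_l(t) for all t. In particular, under general motion (none of (i)–(v)) the full kinematic parameter vector (Y_l, ΔY, X_v, β_l, β_r) is locally identifiable from a monocular camera, an IMU, and wheel odometers. -/
/-! The observability system decouples. The row `ω t * k₃ = 0` admits `k₃ ≠ 0` exactly when
`ω ≡ 0`. The row `ol t * k₄ = orr t * k₅` admits `(k₄, k₅) ≠ 0` exactly when `ol ≡ 0` or `orr` is
a multiple of `ol`, and any such pair extends to a kernel vector, because the `ΔY`-term of the
first row can be absorbed by `β_l k₂`. Failing both, `k₃ = k₄ = k₅ = 0` and the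
first row asks for a nontrivial relation `ol t * (β_l k₂) = ω t * (-k₁)`, i.e. `ol ≡ 0` or `ω` a
multiple of `ol`. Conditions (i) for `orr` and (iii) are special cases of (iv) and (v). -/

section LinearRelation

variable {K ι : Type*} [Field K]

theorem exists_ne_zero_mul_eq_mul_iff (f g : ι → K) :
    (∃ a b : K, ¬(a = 0 ∧ b = 0) ∧ ∀ t, f t * a = g t * b) ↔
      (∀ t, f t = 0) ∨ ∃ lam : K, ∀ t, g t = lam * f t := by
  constructor
  · rintro ⟨a, b, hab, h⟩
    by_cases hb : b = 0
    · have ha : a ≠ 0 := fun ha => hab ⟨ha, hb⟩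
      exact Or.inl fun t => by simpa [hb, ha] using h t
    · refine Or.inr ⟨a / b, fun t => ?_⟩
      field_simp
      linear_combination -(h t)
  · rintro (hf | ⟨lam, hg⟩)
    · exact ⟨1, 0, by simp, fun t => by simp [hf t]⟩
    · exact ⟨lam, 1, by simp, fun t => by rw [hg t]; ring⟩

theorem eq_zero_or_exists_eq_mul_of_const {f g : ι → K} {c d : K}
    (hf : ∀ t, f t = c) (hg : ∀ t, g t = d) :
    (∀ t, f t = 0) ∨ ∃ lam : K, ∀ t, g t = lam * f t := by
  by_cases hc : c = 0
  · exact Or.inl fun t => (hf t).trans hc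
  · exact Or.inr ⟨d / c, fun t => by rw [hf t, hg t, div_mul_cancel₀ d hc]⟩

end LinearRelation

theorem observability_kernel_nontrivial_iff {K ι : Type*} [Field K] (ω ol orr : ι → K)
    (βl ΔY : K) (hβl : βl ≠ 0) :
    (∃ k₁ k₂ k₃ k₄ k₅ : K, ¬(k₁ = 0 ∧ k₂ = 0 ∧ k₃ = 0 ∧ k₄ = 0 ∧ k₅ = 0) ∧
        ∀ t, -(ω t) * k₁ - βl * ol t * k₂ - ΔY * ol t * k₄ = 0 ∧
             ω t * k₃ = 0 ∧
             ol t * k₄ - orr t * k₅ = 0) ↔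
      (∀ t, ω t = 0) ∨
      (∃ a b : K, ¬(a = 0 ∧ b = 0) ∧ ∀ t, ol t * a = orr t * b) ∨
      (∃ a b : K, ¬(a = 0 ∧ b = 0) ∧ ∀ t, ol t * a = ω t * b) := by
  constructor
  · rintro ⟨k₁, k₂, k₃, k₄, k₅, hk, h⟩
    by_cases hk₃ : k₃ = 0
    swap
    · exact Or.inl fun t => (mul_eq_zero.mp (h t).2.1).resolve_right hk₃
    by_cases hk₄₅ : k₄ = 0 ∧ k₅ = 0
    · obtain ⟨hk₄, hk₅⟩ := hk₄₅
      refine Or.inr (Or.inr ⟨βl * k₂, -k₁, ?_, fun t => ?_⟩)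
      · rintro ⟨h₂, h₁⟩
        exact hk ⟨neg_eq_zero.mp h₁, (mul_eq_zero.mp h₂).resolve_left hβl, hk₃, hk₄, hk₅⟩
      · linear_combination -(h t).1 - ΔY * ol t * hk₄
    · exact Or.inr (Or.inl ⟨k₄, k₅, hk₄₅, fun t => by linear_combination (h t).2.2⟩)
  · rintro (hω | ⟨a, b, hab, h⟩ | ⟨a, b, hab, h⟩)
    · exact ⟨0, 0, 1, 0, 0, by simp, fun t => by simp [hω t]⟩
    · refine ⟨0, -(ΔY * a) / βl, 0, a, b, fun hk => hab ⟨hk.2.2.2.1, hk.2.2.2.2⟩, fun t => ?_⟩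
      refine ⟨?_, by ring, by linear_combination h t⟩
      field_simp
      ring
    · refine ⟨-b, a / βl, 0, 0, 0, fun hk => hab ⟨?_, neg_eq_zero.mp hk.1⟩, fun t => ?_⟩
      · simpa [hβl] using hk.2.1
      refine ⟨?_, by ring, by ring⟩
      field_simp
      linear_combination -(h t)

/-- With `β_l ≠ 0` and arbitrary `ΔY`, there exists a nonzero vector
`k ∈ ℝ⁵` annihilating every row of the visual–inertial–odometric observability matrix
for the full kinematic parameter vector iff one of the degenerate conditions (i)–(v)
holds; hence under general motion `(Y_l, ΔY, X_v, β_l, β_r)` is locally identifiable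
from a monocular camera, an IMU, and wheel odometers. -/
theorem vio_full_params_identifiable_iff_nondegenerate
    {ι : Type*} (ω ol orr : ι → ℝ)
    (βl ΔY : ℝ) (hβl : βl ≠ 0) :
    (∃ k₁ k₂ k₃ k₄ k₅ : ℝ, ¬(k₁ = 0 ∧ k₂ = 0 ∧ k₃ = 0 ∧ k₄ = 0 ∧ k₅ = 0) ∧
        ∀ t, -(ω t) * k₁ - βl * ol t * k₂ - ΔY * ol t * k₄ = 0 ∧
             ω t * k₃ = 0 ∧
             ol t * k₄ - orr t * k₅ = 0)
      ↔
      (((∀ t, ol t = 0) ∨ (∀ t, orr t = 0)) ∨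
       (∀ t, ω t = 0) ∨
       (∃ c₁ c₂ c₃ : ℝ, ∀ t, ω t = c₁ ∧ ol t = c₂ ∧ orr t = c₃) ∨
       (∃ lam : ℝ, ∀ t, orr t = lam * ol t) ∨
       (∃ lam : ℝ, ∀ t, ω t = lam * ol t)) := by
  rw [observability_kernel_nontrivial_iff ω ol orr βl ΔY hβl,
    exists_ne_zero_mul_eq_mul_iff, exists_ne_zero_mul_eq_mul_iff]
  constructor
  · rintro (hω | (hol | hr) | (hol | hv))
    exacts [Or.inr (Or.inl hω), Or.inl (Or.inl hol), Or.inr (Or.inr (Or.inr (Or.inl hr))),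
      Or.inl (Or.inl hol), Or.inr (Or.inr (Or.inr (Or.inr hv)))]
  · rintro ((hol | horr) | hω | ⟨c₁, c₂, c₃, hc⟩ | hr | hv)
    · exact Or.inr (Or.inl (Or.inl hol))
    · exact Or.inr (Or.inl (Or.inr ⟨0, fun t => by simp [horr t]⟩))
    · exact Or.inl hω
    · exact Or.inr (Or.inr (eq_zero_or_exists_eq_mul_of_const (fun t => (hc t).2.1)
        (fun t => (hc t).1)))
    · exact Or.inr (Or.inl (Or.inr hr))
    · exact Or.inr (Or.inr (Or.inr hv))
end

section
/- Let ω, o_l, o_r : ι → ℝ and real parameters β_l, ΔY be arbitrary, and for each sampling time t ∈ ι consider the 3×8 block D(t) of the observability matrix for joint estimation of the kinematic parameters and the camera–odometer extrinsic translation, with rows (−ω(t), −β_l·o_l(t), 0, −ΔY·o_l(t), 0, 0, ω(t), 0), (0, 0, ω(t), 0, 0, −ω(t), 0, 0), and (0, 0, 0, o_l(t), −o_r(t), 0, 0, 0). Then the three vectors k₁ = (1,0,0,0,0,0,1,0), k₂ = (0,0,1,0,0,1,0,0), and k₃ = (0,0,0,0,0,0,0,1) are linearly independent and satisfy D(t)·kᵢ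 = 0 for every t ∈ ι and i ∈ {1,2,3}. Consequently the stacked observability matrix has column rank at most 5, so the joint parameter vector (Y_l, ΔY, X_v, β_l, β_r, x_C, y_C, z_C) is not locally identifiable: Y_l is indistinguishable from y_C, X_v is indistinguishable from x_C, and z_C is unidentifiable. -/
open Matrix

theorem linearIndependent_of_coords_eq_single {ι κ R : Type*} [Semiring R] [DecidableEq ι]
    (v : ι → κ → R) (s : ι → κ) (hv : ∀ i, v i ∘ s = Pi.single i 1) :
    LinearIndependent R v :=
  .of_comp (LinearMap.funLeft R R s) <| by
    convert Pi.linearIndependent_single_one ι R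
    exact hv _

/-- For the observability matrix of joint estimation of the kinematic
parameters `(Y_l, ΔY, X_v, β_l, β_r)` and the camera–odometer extrinsic translation
`(x_C, y_C, z_C)`, the three vectors `k₁ = (1,0,0,0,0,0,1,0)`, `k₂ = (0,0,1,0,0,1,0,0)`,
`k₃ = (0,0,0,0,0,0,0,1)` are linearly independent and lie in the kernel of every block
`D(t)`; hence the stacked observability matrix has column rank at most 5 and the joint
parameter vector is not locally identifiable. -/
theorem joint_extrinsic_translation_not_identifiable
    {ι : Type*} (ω ol orr : ι → ℝ) (βl ΔY : ℝ) :
    let D : ι → Matrix (Fin 3) (Fin 8) ℝ := fun t =>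
      !![-(ω t), -(βl * ol t), 0, -(ΔY * ol t), 0,        0,      ω t, 0;
         0,       0,           ω t, 0,          0,      -(ω t),   0,   0;
         0,       0,           0,   ol t,     -(orr t),   0,      0,   0]
    let k : Fin 3 → (Fin 8 → ℝ) :=
      ![![1, 0, 0, 0, 0, 0, 1, 0],
        ![0, 0, 1, 0, 0, 1, 0, 0],
        ![0, 0, 0, 0, 0, 0, 0, 1]]
    LinearIndependent ℝ k ∧ ∀ (t : ι) (i : Fin 3), D t *ᵥ k i = 0 := by
  intro D k
  refine ⟨linearIndependent_of_coords_eq_single k ![0, 2, 7] fun i => ?_, fun t i => ?_⟩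
  · ext j
    fin_cases i <;> fin_cases j <;> rfl
  -- Columns 0 and 6 of `D t` are opposite, as are columns 2 and 5, and column 7 vanishes.
  · ext j
    fin_cases i <;> fin_cases j <;> simp [D, k]
end

section
/- Suppose the parameter tuple (Y_l, ΔY, X_v, β_l, β_r, x_C, y_C) satisfies, for every sampling time t ∈ ι, the camera–IMU–odometer constraints with online extrinsic translation: ω(t)·y_C + a(t) − ω(t)·Y_l − β_l·ΔY·o_l(t) = 0, −ω(t)·x_C + b(t) + ω(t)·X_v = 0, and ω(t) + β_l·o_l(t) − β_r·o_r(t) = 0, where a(t) and b(t) denote the first and second components of the camera velocity rotated into the odometer frame. Then for all δ₁, δ₂ ∈ ℝ, the shifted parameter tuple (Y_l + δ₁, ΔY, X_v + δ₂, β_l, β_r, x_C + δ₂, y_C + δ₁) satisfies the same three constraint equations for every t ∈ ι; moreover the constraints do not involve z_C at all, so any value of the vertical extrinsic translation is consistent with the measurements. -/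
/-- The camera–IMU–odometer constraint equations when the camera–odometer extrinsic
translation `(x_C, y_C, z_C)` is estimated online; note `z_C` does not appear in any
of the equations. -/
def extrinsicConstraints {ι : Type*} (ω ol orr a b : ι → ℝ)
    (Yl ΔY Xv βl βr xC yC _zC : ℝ) : Prop :=
  ∀ t : ι,
    (ω t * yC + a t - ω t * Yl - βl * ΔY * ol t = 0) ∧
    (-(ω t) * xC + b t + ω t * Xv = 0) ∧
    (ω t + βl * ol t - βr * orr t = 0)

/- The constraints see `y_C` and `Y_l` only through `y_C - Y_l`, and `x_C` and `X_v` only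
through `X_v - x_C`; both differences are unchanged by the shift. -/
theorem extrinsicConstraints_shift_iff {ι : Type*} (ω ol orr a b : ι → ℝ)
    (Yl ΔY Xv βl βr xC yC zC zC' δ₁ δ₂ : ℝ) :
    extrinsicConstraints ω ol orr a b
        (Yl + δ₁) ΔY (Xv + δ₂) βl βr (xC + δ₂) (yC + δ₁) zC' ↔
      extrinsicConstraints ω ol orr a b Yl ΔY Xv βl βr xC yC zC := by
  refine forall_congr' fun t => and_congr ?_ (and_congr ?_ Iff.rfl)
  · rw [show ω t * (yC + δ₁) + a t - ω t * (Yl + δ₁) = ω t * yC + a t - ω t * Yl by ring]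
  · rw [show -ω t * (xC + δ₂) + b t + ω t * (Xv + δ₂) = -ω t * xC + b t + ω t * Xv by ring]

/-- If `(Y_l, ΔY, X_v, β_l, β_r, x_C, y_C, z_C)` satisfies the
camera–IMU–odometer constraints with online extrinsic translation at every sampling
time, then for all shifts `δ₁, δ₂ ∈ ℝ` (and any vertical translation `z_C'`, which the
constraints never involve), the shifted tuple
`(Y_l + δ₁, ΔY, X_v + δ₂, β_l, β_r, x_C + δ₂, y_C + δ₁, z_C')` satisfies the same
constraints at every sampling time. -/
theorem extrinsic_translation_shift_indistinguishable
    {ι : Type*} (ω ol orr a b : ι → ℝ)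
    (Yl ΔY Xv βl βr xC yC zC : ℝ)
    (h : extrinsicConstraints ω ol orr a b Yl ΔY Xv βl βr xC yC zC) :
    ∀ δ₁ δ₂ zC' : ℝ,
      extrinsicConstraints ω ol orr a b
        (Yl + δ₁) ΔY (Xv + δ₂) βl βr (xC + δ₂) (yC + δ₁) zC' :=
  fun _ _ _ => (extrinsicConstraints_shift_iff ..).2 h
end
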